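/- arXiv:2510.07065 — 3 statements merged into one kernel-verified Lean document; each statement's English description precedes it below -/
import Mathlib

section
/- Let G be a graph, u,v vertices with dist_G(u,v) = s, and F a set of at most k edges such that u and v remain connected in G−F. If G has no induced cycle of length at least t (for t ≥ 4), then dist_{G−F}(u,v) ≤ s + k·(t−3). -/
namespace StmtAux

open SimpleGraph

variable {V : Type*}

/-- Triangle inequality for `dist` under reachability hypotheses. -/
lemma dist_tri {H : SimpleGraph V} {x y z : V} (hxy : H.Reachable x y)
    (hyz : H.Reachable y z) : H.dist x z ≤ H.dist x y + H.dist y z := by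
  obtain ⟨p, -, hp⟩ := hxy.exists_path_of_dist
  obtain ⟨q, -, hq⟩ := hyz.exists_path_of_dist
  calc H.dist x z ≤ (p.append q).length := dist_le _
    _ = H.dist x y + H.dist y z := by rw [Walk.length_append, hp, hq]

/-- A walk between two intermediate vertices of a walk. -/
lemma exists_mid {H : SimpleGraph V} :
    ∀ {a b : V} (p : H.Walk a b) (i j : ℕ), i ≤ j → j ≤ p.length →
      ∃ q : H.Walk (p.getVert i) (p.getVert j), q.length = j - i := by
  intro a b p
  induction p with
  | nil =>
    intro i j hij hj
    simp only [Walk.length_nil, Nat.le_zero] at hj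
    subst hj
    have hi : i = 0 := Nat.le_zero.mp hij
    subst hi
    exact ⟨Walk.nil, rfl⟩
  | @cons a a' b h p ih =>
    intro i j hij hj
    cases i with
    | zero =>
      cases j with
      | zero => exact ⟨Walk.nil, rfl⟩
      | succ j =>
        obtain ⟨q, hq⟩ := ih 0 j (Nat.zero_le _) (by simpa [Walk.length_cons] using hj)
        refine ⟨(Walk.cons h (q.copy (p.getVert_zero) rfl)).copy
          (by simp) (Walk.getVert_cons_succ p h).symm, ?_⟩
        rw [Walk.length_copy, Walk.length_cons, Walk.length_copy, hq]; omega
    | succ i =>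
      cases j with
      | zero => omega
      | succ j =>
        obtain ⟨q, hq⟩ := ih i j (by omega) (by simpa [Walk.length_cons] using hj)
        refine ⟨q.copy (Walk.getVert_cons_succ p h).symm (Walk.getVert_cons_succ p h).symm, ?_⟩
        simpa using hq

lemma transfer_walk [DecidableEq (Sym2 V)] {G : SimpleGraph V} {F : Finset (Sym2 V)} {f : Sym2 V} {a b : V}
    (R : (G.deleteEdges ↑(F.erase f)).Walk a b) (hf : f ∉ R.edges) :
    ∃ W : (G.deleteEdges ↑F).Walk a b, W.length = R.length := by
  refine ⟨R.transfer _ ?_, Walk.length_transfer _ _⟩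
  intro e he
  have hG := R.edges_subset_edgeSet he
  rw [edgeSet_deleteEdges] at hG ⊢
  refine ⟨hG.1, fun heF => hG.2 ?_⟩
  simp only [Finset.coe_erase, Set.mem_diff, Set.mem_singleton_iff]
  exact ⟨heF, fun h => hf (h ▸ he)⟩


/-- Splitting a path in `G − (F \ f)` that uses `f = s(x,y)` into two
walks in `G − F`, one ending at an endpoint of `f`, the other starting at the
other endpoint. -/
lemma split [DecidableEq (Sym2 V)] {G : SimpleGraph V} {F : Finset (Sym2 V)} {f : Sym2 V}
    {x y : V} (hf : f = s(x, y)) :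
    ∀ {a b : V} (R : (G.deleteEdges ↑(F.erase f)).Walk a b), R.IsPath → f ∈ R.edges →
      (∃ (W1 : (G.deleteEdges ↑F).Walk a x) (W2 : (G.deleteEdges ↑F).Walk y b),
        W1.length + 1 + W2.length = R.length) ∨
      (∃ (W1 : (G.deleteEdges ↑F).Walk a y) (W2 : (G.deleteEdges ↑F).Walk x b),
        W1.length + 1 + W2.length = R.length) := by
  intro a b R
  induction R with
  | nil => intro _ h; simp [Walk.edges_nil] at h
  | @cons a a' b h R ih =>
    intro hpath hmem
    rw [Walk.edges_cons, List.mem_cons] at hmem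
    have hnodup := hpath.edges_nodup
    rw [Walk.edges_cons] at hnodup
    rcases hmem with heq | hmem
    · -- first edge is f
      have hfR : f ∉ R.edges := by
        intro hc
        exact (List.nodup_cons.mp hnodup).1 (heq ▸ hc)
      obtain ⟨W2, hW2⟩ := transfer_walk R hfR
      rw [hf, Sym2.eq_iff] at heq
      rcases heq with ⟨hx, hy⟩ | ⟨hx, hy⟩
      · subst hx; subst hy
        exact Or.inl ⟨Walk.nil, W2, by simp [hW2, Walk.length_cons]; omega⟩
      · subst hx; subst hy
        exact Or.inr ⟨Walk.nil, W2, by simp [hW2, Walk.length_cons]; omega⟩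
    · -- f is in the tail
      have hfirst : s(a, a') ≠ f := by
        intro hc
        exact (List.nodup_cons.mp hnodup).1 (hc ▸ hmem)
      have hadj : (G.deleteEdges ↑F).Adj a a' := by
        rw [deleteEdges_adj] at h ⊢
        refine ⟨h.1, fun hc => h.2 ?_⟩
        simp only [Finset.coe_erase, Set.mem_diff, Set.mem_singleton_iff]
        exact ⟨hc, hfirst⟩
      rcases ih hpath.of_cons hmem with ⟨W1, W2, hlen⟩ | ⟨W1, W2, hlen⟩
      · exact Or.inl ⟨Walk.cons hadj W1, W2, by simp [Walk.length_cons]; omega⟩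
      · exact Or.inr ⟨Walk.cons hadj W1, W2, by simp [Walk.length_cons]; omega⟩


lemma cycle_adj_iff {m : ℕ} (u v : Fin (m + 2)) :
    (cycleGraph (m + 2)).Adj u v ↔
      (u.val + 1 = v.val ∨ v.val + 1 = u.val ∨ (u.val = 0 ∧ v.val = m + 1) ∨
        (v.val = 0 ∧ u.val = m + 1)) := by
  have key : ∀ w z : Fin (m + 2), (w - z = 1) ↔
      (z.val + 1 = w.val ∨ (z.val = m + 1 ∧ w.val = 0)) := by
    intro w z
    rw [sub_eq_iff_eq_add, add_comm (1 : Fin (m+2)) z, Fin.ext_iff, Fin.val_add_one]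
    have hw := w.isLt
    have hz := z.isLt
    by_cases hzl : z = Fin.last (m + 1)
    · have hzv : z.val = m + 1 := by rw [hzl]; rfl
      rw [if_pos hzl]
      omega
    · have hzv : z.val ≠ m + 1 := by
        intro hc; exact hzl (Fin.ext (by simpa using hc))
      simp only [if_neg hzl]
      omega
  rw [cycleGraph_adj, key, key]
  omega

lemma key {G : SimpleGraph V} {t : ℕ} (ht : 4 ≤ t)
    (hcycle : ∀ n, t ≤ n → IsEmpty (cycleGraph n ↪g G))
    (F : Finset (Sym2 V))
    (hne : ∃ c d, G.Adj c d ∧ s(c, d) ∈ F ∧ (G.deleteEdges ↑F).Reachable c d) :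
    ∃ c d, G.Adj c d ∧ s(c, d) ∈ F ∧ (G.deleteEdges ↑F).Reachable c d ∧
      (G.deleteEdges ↑F).dist c d ≤ t - 2 := by
  set H := G.deleteEdges ↑F with hH
  have hHG : ∀ {a b : V}, H.Adj a b → G.Adj a b := fun h => (deleteEdges_adj.mp h).1
  set Φ : Set ℕ :=
    {n | ∃ c d, G.Adj c d ∧ s(c, d) ∈ F ∧ H.Reachable c d ∧ H.dist c d = n} with hΦdef
  have hΦne : Φ.Nonempty := by
    obtain ⟨c, d, h1, h2, h3⟩ := hne
    exact ⟨H.dist c d, c, d, h1, h2, h3, rfl⟩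
  obtain ⟨c, d, hadj, hcdF, hr, hdist⟩ := Nat.sInf_mem hΦne
  refine ⟨c, d, hadj, hcdF, hr, ?_⟩
  by_contra hbig
  push_neg at hbig
  obtain ⟨S, hSp, hSl⟩ := hr.exists_path_of_dist
  set L := S.length with hL
  have hL1 : H.dist c d = L := hSl.symm
  have hL3 : 3 ≤ L := by omega
  have hgv0 : S.getVert 0 = c := S.getVert_zero
  have hgvL : S.getVert L = d := S.getVert_length
  -- distances between intermediate vertices
  have hmid : ∀ i j, i ≤ j → j ≤ L →
      H.Reachable (S.getVert i) (S.getVert j) ∧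
      H.dist (S.getVert i) (S.getVert j) = j - i := by
    intro i j hij hj
    obtain ⟨q, hq⟩ := exists_mid S i j hij hj
    obtain ⟨q1, hq1⟩ := exists_mid S 0 i (Nat.zero_le _) (hij.trans hj)
    obtain ⟨q2, hq2⟩ := exists_mid S j L hj le_rfl
    have hup : H.dist (S.getVert i) (S.getVert j) ≤ j - i := hq ▸ dist_le q
    have hd1 : H.dist c (S.getVert i) ≤ i := by
      have := dist_le (q1.copy hgv0 rfl)
      rw [Walk.length_copy] at this
      omega
    have hd2 : H.dist (S.getVert j) d ≤ L - j := by
      have := dist_le (q2.copy rfl hgvL)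
      rw [Walk.length_copy] at this
      omega
    have t1 : H.dist (S.getVert i) d ≤
        H.dist (S.getVert i) (S.getVert j) + H.dist (S.getVert j) d :=
      dist_tri q.reachable (q2.copy rfl hgvL).reachable
    have t2 : H.dist c d ≤ H.dist c (S.getVert i) + H.dist (S.getVert i) d :=
      dist_tri (q1.copy hgv0 rfl).reachable (q.reachable.trans (q2.copy rfl hgvL).reachable)
    exact ⟨q.reachable, by omega⟩
  have hinj : ∀ i j, i ≤ j → j ≤ L → S.getVert i = S.getVert j → i = j := by
    intro i j hij hj heq
    have := (hmid i j hij hj).2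
    rw [heq, SimpleGraph.dist_self] at this
    omega
  by_cases hchord : ∃ i j, i + 2 ≤ j ∧ j ≤ L ∧ ¬(i = 0 ∧ j = L) ∧
      G.Adj (S.getVert i) (S.getVert j)
  · obtain ⟨i, j, hij2, hjL, hnot, hgadj⟩ := hchord
    obtain ⟨hreachij, hdistij⟩ := hmid i j (by omega) hjL
    have hgF : s(S.getVert i, S.getVert j) ∈ F := by
      by_contra hgF
      have hadj' : H.Adj (S.getVert i) (S.getVert j) :=
        deleteEdges_adj.mpr ⟨hgadj, by simpa using hgF⟩
      have h1 : H.dist (S.getVert i) (S.getVert j) ≤ 1 := by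
        have := dist_le (Walk.cons hadj' Walk.nil)
        simpa using this
      omega
    have hmemΦ : (j - i) ∈ Φ := ⟨S.getVert i, S.getVert j, hgadj, hgF, hreachij, hdistij⟩
    have hle := Nat.sInf_le hmemΦ
    omega
  · push_neg at hchord
    set m := L - 1 with hm
    have hLm : m + 1 = L := by omega
    refine (hcycle (m + 2) (by omega)).false ?_
    refine ⟨⟨fun i => S.getVert i.val, ?_⟩, ?_⟩
    · intro i j hij
      have hi := i.isLt
      have hj := j.isLt
      refine Fin.ext ?_
      rcases Nat.lt_trichotomy i.val j.val with h | h | h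
      · have := hinj i.val j.val (by omega) (by omega) hij; omega
      · exact h
      · have := hinj j.val i.val (by omega) (by omega) hij.symm; omega
    · intro i j
      show G.Adj (S.getVert i.val) (S.getVert j.val) ↔ (cycleGraph (m + 2)).Adj i j
      rw [cycle_adj_iff]
      have hi := i.isLt
      have hj := j.isLt
      constructor
      · intro hGadj
        have hne : i.val ≠ j.val := by
          intro h
          exact G.irrefl (by rw [h] at hGadj; exact hGadj)
        rcases Nat.lt_or_ge i.val j.val with h | h
        · by_cases h1 : i.val + 1 = j.val
          · exact Or.inl h1
          · by_cases h2 : i.val = 0 ∧ j.val = m + 1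
            · exact Or.inr (Or.inr (Or.inl h2))
            · exact absurd hGadj
                (hchord i.val j.val (by omega) (by omega) (by omega))
        · have h' : j.val < i.val := by omega
          by_cases h1 : j.val + 1 = i.val
          · exact Or.inr (Or.inl h1)
          · by_cases h2 : j.val = 0 ∧ i.val = m + 1
            · exact Or.inr (Or.inr (Or.inr h2))
            · exact absurd hGadj.symm
                (hchord j.val i.val (by omega) (by omega) (by omega))
      · intro hcyc
        have hstep : ∀ a : ℕ, a < L → G.Adj (S.getVert a) (S.getVert (a + 1)) :=
          fun a ha => hHG (S.adj_getVert_succ ha)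
        rcases hcyc with h | h | ⟨h0, h1⟩ | ⟨h0, h1⟩
        · have := hstep i.val (by omega)
          rwa [h] at this
        · have := hstep j.val (by omega)
          rw [h] at this
          exact this.symm
        · rw [h0, h1, hgv0, hLm, hgvL]
          exact hadj
        · rw [h0, h1, hgv0, hLm, hgvL]
          exact hadj.symm


lemma main (G : SimpleGraph V) (t : ℕ) (ht : 4 ≤ t)
    (hcycle : ∀ n, t ≤ n → IsEmpty (cycleGraph n ↪g G)) :
    ∀ (k : ℕ) (F : Finset (Sym2 V)), F.card ≤ k → ∀ u v : V,
      (G.deleteEdges ↑F).Reachable u v →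
      (G.deleteEdges ↑F).dist u v ≤ G.dist u v + F.card * (t - 3) := by
  classical
  intro k
  induction k with
  | zero =>
    intro F hF u v hreach
    have hFe : F = ∅ := Finset.card_eq_zero.mp (Nat.le_zero.mp hF)
    subst hFe
    simp only [Finset.coe_empty, deleteEdges_empty, Finset.card_empty, Nat.zero_mul,
      Nat.add_zero, le_refl]
  | succ k ih =>
    intro F hF u v hreach
    by_cases hFk : F.card ≤ k
    · exact ih F hFk u v hreach
    have hcard : F.card = k + 1 := by omega
    have hFne : F.Nonempty := Finset.card_pos.mp (by omega)
    by_cases hT : ∃ c d, G.Adj c d ∧ s(c, d) ∈ F ∧ (G.deleteEdges ↑F).Reachable c d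
    · obtain ⟨c, d, hcd, hcdF, hcdr, hcddist⟩ := key ht hcycle F hT
      have hF'card : (F.erase s(c, d)).card = k := by
        rw [Finset.card_erase_of_mem hcdF]; omega
      have hmono : G.deleteEdges ↑F ≤ G.deleteEdges ↑(F.erase s(c, d)) :=
        deleteEdges_anti (by exact_mod_cast F.erase_subset s(c, d))
      have hreach' : (G.deleteEdges ↑(F.erase s(c, d))).Reachable u v := hreach.mono hmono
      have hIH := ih (F.erase s(c, d)) (by omega) u v hreach'
      obtain ⟨R, hRp, hRl⟩ := hreach'.exists_path_of_dist
      have hmul : F.card * (t - 3) = (F.erase s(c, d)).card * (t - 3) + (t - 3) := by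
        rw [hcard, hF'card, Nat.succ_mul]
      by_cases hfR : s(c, d) ∈ R.edges
      · obtain ⟨D, -, hDl⟩ := hcdr.exists_path_of_dist
        have hD2 : D.length ≤ t - 2 := by rw [hDl]; exact hcddist
        have hfinal : (G.deleteEdges ↑F).dist u v ≤ R.length + (t - 3) := by
          rcases split rfl R hRp hfR with ⟨W1, W2, hlen⟩ | ⟨W1, W2, hlen⟩
          · have hW := dist_le (W1.append (D.append W2))
            rw [Walk.length_append, Walk.length_append] at hW
            omega
          · have hW := dist_le (W1.append (D.reverse.append W2))
            rw [Walk.length_append, Walk.length_append, Walk.length_reverse] at hW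
            omega
        rw [hRl] at hfinal
        calc (G.deleteEdges ↑F).dist u v
            ≤ (G.deleteEdges ↑(F.erase s(c, d))).dist u v + (t - 3) := hfinal
          _ ≤ G.dist u v + (F.erase s(c, d)).card * (t - 3) + (t - 3) :=
              Nat.add_le_add_right hIH _
          _ = G.dist u v + F.card * (t - 3) := by rw [hmul, Nat.add_assoc]
      · obtain ⟨W, hW⟩ := transfer_walk R hfR
        have h1 : (G.deleteEdges ↑F).dist u v ≤
            (G.deleteEdges ↑(F.erase s(c, d))).dist u v := by
          have := dist_le W
          rwa [hW, hRl] at this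
        exact h1.trans (hIH.trans (Nat.add_le_add_left
          (mul_le_mul_left (by omega) _) _))
    · obtain ⟨f, hfF⟩ := hFne
      obtain ⟨x, y, rfl⟩ : ∃ x y, f = s(x, y) := by
        induction f using Sym2.ind with | _ x y => exact ⟨x, y, rfl⟩
      have hF'card : (F.erase s(x, y)).card = k := by
        rw [Finset.card_erase_of_mem hfF]; omega
      have hmono : G.deleteEdges ↑F ≤ G.deleteEdges ↑(F.erase s(x, y)) :=
        deleteEdges_anti (by exact_mod_cast F.erase_subset s(x, y))
      have hreach' : (G.deleteEdges ↑(F.erase s(x, y))).Reachable u v := hreach.mono hmono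
      have hIH := ih (F.erase s(x, y)) (by omega) u v hreach'
      obtain ⟨R, hRp, hRl⟩ := hreach'.exists_path_of_dist
      have hfR : s(x, y) ∉ R.edges := by
        intro hfR
        have hfE : G.Adj x y := by
          have := R.edges_subset_edgeSet hfR
          rw [edgeSet_deleteEdges] at this
          exact (mem_edgeSet G).mp this.1
        have hrxy : (G.deleteEdges ↑F).Reachable x y := by
          rcases split rfl R hRp hfR with ⟨W1, W2, -⟩ | ⟨W1, W2, -⟩
          · exact (W1.reachable.symm.trans hreach).trans W2.reachable.symm
          · exact (W2.reachable.trans hreach.symm).trans W1.reachable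
        exact hT ⟨x, y, hfE, hfF, hrxy⟩
      obtain ⟨W, hW⟩ := transfer_walk R hfR
      have h1 : (G.deleteEdges ↑F).dist u v ≤
          (G.deleteEdges ↑(F.erase s(x, y))).dist u v := by
        have := dist_le W
        rwa [hW, hRl] at this
      exact h1.trans (hIH.trans (Nat.add_le_add_left
        (mul_le_mul_left (by omega) _) _))

end StmtAux

/-- If `G` has no induced cycle of length at least `t` (`t ≥ 4`), `dist_G u v = s`,
and `F` is a set of at most `k` edges whose deletion keeps `u,v` connected, then
`dist_{G−F}(u,v) ≤ s + k·(t−3)`. -/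
theorem stmt_0 {V : Type*} (G : SimpleGraph V) (u v : V) (s k t : ℕ)
    (ht : 4 ≤ t)
    (hcycle : ∀ n, t ≤ n → IsEmpty (SimpleGraph.cycleGraph n ↪g G))
    (hdist : G.dist u v = s)
    (F : Finset (Sym2 V)) (hF : F.card ≤ k)
    (hreach : (G.deleteEdges ↑F).Reachable u v) :
    (G.deleteEdges ↑F).dist u v ≤ s + k * (t - 3) := by
  have h := StmtAux.main G t ht hcycle F.card F le_rfl u v hreach
  rw [hdist] at h
  exact h.trans (Nat.add_le_add_left (mul_le_mul_left hF _) _)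
end

section
/- Let G be a graph with a cluster vertex deletion set of size at most k (i.e., a set X of at most k vertices such that G−X is a disjoint union of cliques). Then every connected component of G has diameter at most 3k+1. -/
/-!
Take a shortest path `u = x₀, x₁, …, xₗ = v`. No three consecutive vertices `xᵢ, xᵢ₊₁, xᵢ₊₂`
avoid `X`: otherwise they lie in one clique of `G - X`, so `xᵢ = xᵢ₊₂` or `xᵢxᵢ₊₂` is an edge,
and the path could be shortened. Hence each of the disjoint windows
`{x₀, x₁, x₂}, {x₃, x₄, x₅}, …` meets `X`, and there are at most `|X|` of them that fit into
the path, so `l ≤ 3|X| + 1`.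
-/

namespace SimpleGraph

variable {V : Type*} {G : SimpleGraph V} {u v : V}

lemma Walk.sub_le_dist_getVert {p : G.Walk u v} (hp : p.length = G.dist u v) {i j : ℕ}
    (hij : i ≤ j) (hj : j ≤ p.length) : j - i ≤ G.dist (p.getVert i) (p.getVert j) := by
  have hreach : G.Reachable (p.getVert i) (p.getVert j) :=
    ((p.take i).reverse.append (p.take j)).reachable
  obtain ⟨q, hq⟩ := hreach.exists_walk_length_eq_dist
  have := G.dist_le ((p.take i).append (q.append (p.drop j)))
  simp only [Walk.length_append, Walk.take_length, Walk.drop_length, hq] at this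
  omega

lemma eq_or_adj_of_adj_of_adj_of_notMem {X : Set V}
    (hclusters : ∀ u v : ↥(Xᶜ), (G.induce Xᶜ).Reachable u v → u = v ∨ (G.induce Xᶜ).Adj u v)
    {a b c : V} (ha : a ∉ X) (hb : b ∉ X) (hc : c ∉ X) (hab : G.Adj a b) (hbc : G.Adj b c) :
    a = c ∨ G.Adj a c := by
  have hab' : (G.induce Xᶜ).Adj ⟨a, ha⟩ ⟨b, hb⟩ := hab
  have hbc' : (G.induce Xᶜ).Adj ⟨b, hb⟩ ⟨c, hc⟩ := hbc
  rcases hclusters _ _ (hab'.reachable.trans hbc'.reachable) with h | h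
  · exact .inl (congrArg Subtype.val h)
  · exact .inr h

lemma Walk.exists_getVert_mem_of_length_eq_dist {X : Set V}
    (hclusters : ∀ u v : ↥(Xᶜ), (G.induce Xᶜ).Reachable u v → u = v ∨ (G.induce Xᶜ).Adj u v)
    {p : G.Walk u v} (hp : p.length = G.dist u v) {i : ℕ} (hi : i + 2 ≤ p.length) :
    ∃ j, i ≤ j ∧ j ≤ i + 2 ∧ p.getVert j ∈ X := by
  by_contra! hnot
  have hdist := p.sub_le_dist_getVert hp (Nat.le_add_right i 2) hi
  rcases eq_or_adj_of_adj_of_adj_of_notMem hclusters (hnot i le_rfl (by omega))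
      (hnot (i + 1) (by omega) (by omega)) (hnot (i + 2) (by omega) le_rfl)
      (p.adj_getVert_succ (by omega)) (p.adj_getVert_succ (by omega)) with h | h
  · rw [h, dist_self] at hdist
    omega
  · rw [dist_eq_one_iff_adj.mpr h] at hdist
    omega

lemma Walk.IsPath.length_le_of_forall_exists_getVert_mem {X : Set V} (hX : X.Finite)
    {p : G.Walk u v} (hp : p.IsPath)
    (hwindow : ∀ i, i + 2 ≤ p.length → ∃ j, i ≤ j ∧ j ≤ i + 2 ∧ p.getVert j ∈ X) :
    p.length ≤ 3 * X.ncard + 1 := by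
  by_contra! hlong
  have hpick : ∀ m : Fin (X.ncard + 1), ∃ j, 3 * (m : ℕ) ≤ j ∧ j ≤ 3 * (m : ℕ) + 2 ∧ p.getVert j ∈ X :=
    fun m => hwindow _ (by omega)
  choose f hf_ge hf_le hf_mem using hpick
  have hinj : Set.InjOn (fun m => p.getVert (f m)) Set.univ := by
    intro m _ m' _ h
    have := hp.getVert_injOn (show f m ≤ p.length by have := hf_le m; omega)
      (show f m' ≤ p.length by have := hf_le m'; omega) h
    have := hf_ge m; have := hf_le m; have := hf_ge m'; have := hf_le m'
    exact Fin.ext (by omega)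
  have := Set.ncard_le_ncard_of_injOn _ (fun m _ => hf_mem m) hinj hX
  rw [Set.ncard_univ, Nat.card_eq_fintype_card, Fintype.card_fin] at this
  omega

end SimpleGraph

/-- If `G` has a cluster vertex deletion set `X` of size at most `k` (every
component of `G − X` is a clique), then every connected component of `G` has
diameter at most `3k+1`. -/
theorem stmt_7 {V : Type*} (G : SimpleGraph V) (k : ℕ) (X : Set V)
    (hX : X.Finite) (hXcard : X.ncard ≤ k)
    (hclusters : ∀ u v : ↥(Xᶜ), (G.induce Xᶜ).Reachable u v →
      u = v ∨ (G.induce Xᶜ).Adj u v) :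
    ∀ u v : V, G.Reachable u v → G.dist u v ≤ 3 * k + 1 := by
  intro u v huv
  obtain ⟨p, hpath, hlen⟩ := huv.exists_path_of_dist
  have := hpath.length_le_of_forall_exists_getVert_mem hX
    fun _ hi => p.exists_getVert_mem_of_length_eq_dist hclusters hlen hi
  omega
end

section
/- Let G = (R ∪ B, E) be a bipartite graph with parts R and B. Construct G' by duplicating B into copies B1, B2, adding blue vertices x1, x2 and red vertices y1, y2, connecting each r ∈ R to the copy u1 ∈ B1 of u if ru ∈ E and to u2 ∈ B2 otherwise, connecting y1 to x1 and to some |B|−1 vertices of B2, and y2 to x2 and to the remaining vertices of B2 so that B2 ⊆ N(y1) ∪ N(y2). Then R has a subset of size ≤ k dominating B in G if and only if R' = R ∪ {y1,y2} has a subset of size ≤ k+2 dominating B' = B1 ∪ B2 ∪ {x1,x2} in G'. -/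
/-!
The blue vertices `x₁`, `x₂` have `y₁`, `y₂` as their only neighbours, so every dominating set
of `G'` contains both; together `y₁` and `y₂` dominate all of `B₂ ∪ {x₁, x₂}`. Hence the
dominating sets of `G'` are exactly `D ∪ {y₁, y₂}` with `D ⊆ R` dominating `B₁`, a copy of `B`.
-/

/-- Adjacency of the constructed bipartite graph `G'` in the uniform-degree RBDS
reduction. Red side: `R ⊕ Bool` (`Sum.inr false = y₁`, `Sum.inr true = y₂`).
Blue side: `(B ⊕ B) ⊕ Bool` (`Sum.inl (Sum.inl u) = u₁ ∈ B₁`,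
`Sum.inl (Sum.inr u) = u₂ ∈ B₂`, `Sum.inr false = x₁`, `Sum.inr true = x₂`).
`S` is the set of `|B|−1` vertices of `B₂` joined to `y₁`. -/
def rbdsAdj {R B : Type*} (E : R → B → Prop) (S : Finset B) :
    (R ⊕ Bool) → ((B ⊕ B) ⊕ Bool) → Prop
  | Sum.inl r, Sum.inl (Sum.inl u) => E r u
  | Sum.inl r, Sum.inl (Sum.inr u) => ¬ E r u
  | Sum.inl _, Sum.inr _ => False
  | Sum.inr _, Sum.inl (Sum.inl _) => False
  | Sum.inr false, Sum.inl (Sum.inr u) => u ∈ S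
  | Sum.inr true, Sum.inl (Sum.inr u) => u ∉ S
  | Sum.inr b, Sum.inr b' => b = b'

open Finset

def Dominates {α β : Type*} (adj : α → β → Prop) (D : Finset α) : Prop :=
  ∀ b, ∃ a ∈ D, adj a b

section rbdsAdj

variable {R B : Type*} {E : R → B → Prop} {S : Finset B}

lemma rbdsAdj_inl_inl_iff {r' : R ⊕ Bool} {u : B} :
    rbdsAdj E S r' (.inl (.inl u)) ↔ ∃ r, r' = .inl r ∧ E r u := by
  rcases r' with r | (_ | _) <;> simp [rbdsAdj]

lemma rbdsAdj_inr_iff {r' : R ⊕ Bool} {b : Bool} :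
    rbdsAdj E S r' (.inr b) ↔ r' = .inr b := by
  rcases r' with r | c
  · simp [rbdsAdj]
  · cases c <;> cases b <;> simp [rbdsAdj]

lemma Dominates.disjSum_univ {D : Finset R} (hD : Dominates E D) :
    Dominates (rbdsAdj E S) (D.disjSum univ) := by
  rintro ((u | u) | b)
  · obtain ⟨r, hr, hru⟩ := hD u
    exact ⟨.inl r, inl_mem_disjSum.2 hr, hru⟩
  · by_cases hu : u ∈ S
    · exact ⟨.inr false, inr_mem_disjSum.2 (mem_univ _), hu⟩
    · exact ⟨.inr true, inr_mem_disjSum.2 (mem_univ _), hu⟩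
  · exact ⟨.inr b, inr_mem_disjSum.2 (mem_univ _), rbdsAdj_inr_iff.2 rfl⟩

lemma Dominates.toLeft {D' : Finset (R ⊕ Bool)} (hD' : Dominates (rbdsAdj E S) D') :
    Dominates E D'.toLeft := by
  intro u
  obtain ⟨r', hr', hadj⟩ := hD' (.inl (.inl u))
  obtain ⟨r, rfl, hru⟩ := rbdsAdj_inl_inl_iff.1 hadj
  exact ⟨r, mem_toLeft.2 hr', hru⟩

lemma Dominates.toRight_eq_univ {D' : Finset (R ⊕ Bool)} (hD' : Dominates (rbdsAdj E S) D') :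
    D'.toRight = univ := by
  refine eq_univ_of_forall fun b => ?_
  obtain ⟨r', hr', hadj⟩ := hD' (.inr b)
  rw [rbdsAdj_inr_iff] at hadj
  exact mem_toRight.2 (hadj ▸ hr')

end rbdsAdj

theorem stmt_8_general {R B : Type*} (E : R → B → Prop) (k : ℕ)
    (S : Finset B) :
    (∃ D : Finset R, D.card ≤ k ∧ ∀ b : B, ∃ r ∈ D, E r b) ↔
    (∃ D' : Finset (R ⊕ Bool), D'.card ≤ k + 2 ∧
      ∀ b' : (B ⊕ B) ⊕ Bool, ∃ r' ∈ D', rbdsAdj E S r' b') := by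
  constructor
  · rintro ⟨D, hk, hD⟩
    refine ⟨D.disjSum univ, ?_, Dominates.disjSum_univ hD⟩
    rw [card_disjSum, card_univ, Fintype.card_bool]
    omega
  · rintro ⟨D', hk, hD'⟩
    refine ⟨D'.toLeft, ?_, Dominates.toLeft hD'⟩
    have hcard := card_toLeft_add_card_toRight (u := D')
    rw [Dominates.toRight_eq_univ hD', card_univ, Fintype.card_bool] at hcard
    omega

/-- The RBDS reduction is correct: `R` has a set of size ≤ k dominating `B` in `G`
iff the red side of `G'` has a set of size ≤ k+2 dominating the blue side of `G'`. -/
theorem stmt_8 {R B : Type*} [Fintype B] (E : R → B → Prop) (k : ℕ)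
    (S : Finset B) (hS : S.card = Fintype.card B - 1) :
    (∃ D : Finset R, D.card ≤ k ∧ ∀ b : B, ∃ r ∈ D, E r b) ↔
    (∃ D' : Finset (R ⊕ Bool), D'.card ≤ k + 2 ∧
      ∀ b' : (B ⊕ B) ⊕ Bool, ∃ r' ∈ D', rbdsAdj E S r' b') :=
  stmt_8_general E k S
end
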